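/- With the notation of the geometric setup: γ(𝔾(D_{L'}^{L})‾) ≤ δ(D_{L'}^{L})_Ω ≤ ara_{Sat(L')}(I_L) ≤ ara_{L'}(I_L); that is, the chromatic number of the complement of the {0,1}-skeleton of D_{L'}^{L} is at most δ(D_{L'}^{L})_Ω, which is a lower bound for the Sat(L')-homogeneous arithmetical rank of I_L, which in turn is at most the L'-homogeneous arithmetical rank of I_L. -/

import Mathlib

/-!
For a subcone `σ(E)`, let `S_E` be the set of indices `l` with `aₗ ∈ σ(E)`. By Farkas' lemma,
`σ(E)` is a face of `σ` exactly when `S_E` is `L`-closed, i.e. when every binomial of `I_L`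
vanishes at the `0/1`-point supported on `S_E`. So for a vertex `𝔼` of `D` (a minimal non-face)
some binomial, hence some member `F` of any `Sat(L')`-homogeneous family defining `rad I_L`, does
not vanish at the point of `S_𝔼`. A Möbius inversion over the `L`-closed index sets then shows
that the `B`-degree of `F` lies in `relint π(σ(𝔼))`, using minimality of `𝔼`. Assigning such an
`F` to every vertex, the fibres are faces of `D` and form a matching covering all vertices, so
`δ(D)_Ω` is at most the size of the family. Finally, a maximal matching covers every vertex, and
its blocks, being faces of `D`, colour the complement of the `1`-skeleton.
-/

open MvPolynomial

/-- A polynomial is `L`-homogeneous if the difference of any two exponent vectors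
occurring in its support lies in `L`. -/
def IsLHomog {n : ℕ} {K : Type*} [CommSemiring K] (L : Set (Fin n → ℤ))
    (F : MvPolynomial (Fin n) K) : Prop :=
  ∀ u ∈ F.support, ∀ v ∈ F.support, (fun j => ((u j : ℤ) - (v j : ℤ))) ∈ L

/-- An ideal is `L`-homogeneous if it is generated by `L`-homogeneous polynomials. -/
def IsLHomogIdeal {n : ℕ} {K : Type*} [CommSemiring K] (L : Set (Fin n → ℤ))
    (J : Ideal (MvPolynomial (Fin n) K)) : Prop :=
  ∃ S : Set (MvPolynomial (Fin n) K), (∀ F ∈ S, IsLHomog L F) ∧ J = Ideal.span S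

/-- The positive part `u⁺` of an integer vector, as an exponent vector. -/
noncomputable def posPart {n : ℕ} (u : Fin n → ℤ) : Fin n →₀ ℕ :=
  Finsupp.equivFunOnFinite.symm (fun j => (u j).toNat)

/-- The lattice ideal `I_L = ⟨x^{u⁺} - x^{u⁻} : u ∈ L⟩`. -/
noncomputable def latticeIdeal {n : ℕ} (K : Type*) [CommRing K] (L : AddSubgroup (Fin n → ℤ)) :
    Ideal (MvPolynomial (Fin n) K) :=
  Ideal.span {F | ∃ u ∈ L, F = monomial (posPart u) (1 : K) - monomial (posPart (-u)) (1 : K)}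

/-- The saturation of a lattice `L ⊆ ℤⁿ`. -/
def satSet {n : ℕ} (L : AddSubgroup (Fin n → ℤ)) : Set (Fin n → ℤ) :=
  {α | ∃ d : ℤ, d ≠ 0 ∧ d • α ∈ L}

/-- The arithmetical rank of an ideal. -/
noncomputable def ara {R : Type*} [CommSemiring R] (J : Ideal R) : ℕ :=
  sInf {s | ∃ F : Fin s → R, (∀ i, F i ∈ J) ∧ J.radical = (Ideal.span (Set.range F)).radical}

/-- The `L`-homogeneous arithmetical rank of an ideal. -/
noncomputable def araH {n : ℕ} {K : Type*} [CommSemiring K] (L : Set (Fin n → ℤ))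
    (J : Ideal (MvPolynomial (Fin n) K)) : ℕ :=
  sInf {s | ∃ F : Fin s → MvPolynomial (Fin n) K, (∀ i, IsLHomog L (F i)) ∧
    J.radical = (Ideal.span (Set.range F)).radical}

/-- The cone `pos_ℚ(v₁,…,vₙ)` spanned by finitely many vectors of `ℚ^m`. -/
def posQ {n m : ℕ} (v : Fin n → Fin m → ℚ) : Set (Fin m → ℚ) :=
  {x | ∃ d : Fin n → ℚ, (∀ i, 0 ≤ d i) ∧ x = ∑ i, d i • v i}

/-- The subcone `σ(E) = pos_ℚ(rᵢ : i ∈ E)`. -/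
def posE {t m : ℕ} (r : Fin t → Fin m → ℚ) (E : Finset (Fin t)) : Set (Fin m → ℚ) :=
  {x | ∃ d : Fin t → ℚ, (∀ i, 0 ≤ d i) ∧ (∀ i ∉ E, d i = 0) ∧ x = ∑ i, d i • r i}

/-- The relative interior `relint_ℚ(pos_ℚ(rᵢ : i ∈ E))`. -/
def relintE {t m : ℕ} (r : Fin t → Fin m → ℚ) (E : Finset (Fin t)) : Set (Fin m → ℚ) :=
  {x | ∃ d : Fin t → ℚ, (∀ i ∈ E, 0 < d i) ∧ (∀ i ∉ E, d i = 0) ∧ x = ∑ i, d i • r i}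

/-- `F` is a face of the cone `σ`: it is cut out by a supporting linear functional. -/
def IsFaceOf {m : ℕ} (σ F : Set (Fin m → ℚ)) : Prop :=
  ∃ c : Fin m → ℚ, (∀ x ∈ σ, 0 ≤ ∑ j, c j * x j) ∧ F = σ ∩ {x | ∑ j, c j * x j = 0}

/-- The ray spanned by a vector `v`. -/
def rayOf {m : ℕ} (v : Fin m → ℚ) : Set (Fin m → ℚ) := {x | ∃ q : ℚ, 0 ≤ q ∧ x = q • v}

/-- Cast a family of integer vectors to rational vectors. -/
def castQ {n m : ℕ} (a : Fin n → Fin m → ℤ) : Fin n → Fin m → ℚ := fun i j => (a i j : ℚ)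

/-- `T` is a face of the simplicial complex `D` (with vertices `𝔼₁,…,𝔼_f`) determined by the
projected cone data `rB`: the relative interiors of the cones `pos_ℚ(rB j : j ∈ 𝔼ᵢ)`, `i ∈ T`,
have a common point. -/
def DFace {t f m : ℕ} (rB : Fin t → Fin m → ℚ) (𝔼 : Fin f → Finset (Fin t))
    (T : Set (Fin f)) : Prop :=
  (⋂ j ∈ T, relintE rB (𝔼 j)).Nonempty

/-- The cone `cone(N)` of a monomial with exponent vector `u`:
the intersection of all subcones `σ(E)` containing all the `aᵢ` with `i` in the support of `u`. -/
def coneOf {n t m : ℕ} (aQ : Fin n → Fin m → ℚ) (rQ : Fin t → Fin m → ℚ)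
    (u : Fin n →₀ ℕ) : Set (Fin m → ℚ) :=
  ⋂ E ∈ {E : Finset (Fin t) | ∀ i ∈ u.support, aQ i ∈ posE rQ E}, posE rQ E

/-- The complement of the `{0,1}`-skeleton of the simplicial complex determined by `rB, 𝔼`:
two distinct vertices are adjacent iff they are not joined by an edge of the complex. -/
def compSkel {t f m : ℕ} (rB : Fin t → Fin m → ℚ) (𝔼 : Fin f → Finset (Fin t)) :
    SimpleGraph (Fin f) where
  Adj i j := i ≠ j ∧ ¬ DFace rB 𝔼 {i, j}
  symm := by
    constructor
    intro i j h
    exact ⟨h.1.symm, by rw [Set.pair_comm]; exact h.2⟩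
  loopless := ⟨fun i h => h.1 rfl⟩

/-- An `Ω`-matching: a finite set of pairwise disjoint nonempty faces of the complex. -/
def IsOmegaMatching {t f m : ℕ} (rB : Fin t → Fin m → ℚ) (𝔼 : Fin f → Finset (Fin t))
    (M : Finset (Finset (Fin f))) : Prop :=
  (∀ T ∈ M, T.Nonempty ∧ DFace rB 𝔼 (T : Set (Fin f))) ∧
    (M : Set (Finset (Fin f))).Pairwise Disjoint

/-- The support cardinality of a matching. -/
def suppCard {f : ℕ} (M : Finset (Finset (Fin f))) : ℕ := (M.biUnion id).card

/-- `δ(D)_Ω`: the minimum cardinality of a maximal `Ω`-matching. -/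
noncomputable def deltaOmega {t f m : ℕ} (rB : Fin t → Fin m → ℚ)
    (𝔼 : Fin f → Finset (Fin t)) : ℕ :=
  sInf {s | ∃ M : Finset (Finset (Fin f)), IsOmegaMatching rB 𝔼 M ∧ M.card = s ∧
    ∀ M' : Finset (Finset (Fin f)), IsOmegaMatching rB 𝔼 M' → suppCard M' ≤ suppCard M}


open MvPolynomial Finset

section Cones

variable {m t : ℕ}

def coneE (r : Fin t → Fin m → ℚ) (E : Finset (Fin t)) : PointedCone ℚ (Fin m → ℚ) where
  carrier := posE r E
  zero_mem' := ⟨0, fun _ => le_rfl, fun _ _ => rfl, by simp⟩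
  add_mem' := by
    rintro _ _ ⟨d, hd, hdE, rfl⟩ ⟨e, he, heE, rfl⟩
    refine ⟨d + e, fun i => add_nonneg (hd i) (he i), fun i hi => by simp [hdE i hi, heE i hi], ?_⟩
    simp only [Pi.add_apply, add_smul, sum_add_distrib]
  smul_mem' := by
    rintro ⟨c, hc⟩ _ ⟨d, hd, hdE, rfl⟩
    refine ⟨c • d, fun i => mul_nonneg hc (hd i), fun i hi => by simp [hdE i hi], ?_⟩
    simp [smul_sum, smul_smul]

lemma mem_coneE {r : Fin t → Fin m → ℚ} {E : Finset (Fin t)} {x : Fin m → ℚ} :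
    x ∈ coneE r E ↔ x ∈ posE r E := Iff.rfl

lemma posQ_eq_posE_univ (r : Fin t → Fin m → ℚ) : posQ r = posE r univ := by
  ext x
  exact ⟨fun ⟨d, hd, hx⟩ => ⟨d, hd, by simp, hx⟩, fun ⟨d, hd, _, hx⟩ => ⟨d, hd, hx⟩⟩

lemma posE_mono (r : Fin t → Fin m → ℚ) {E E' : Finset (Fin t)} (h : E ⊆ E') :
    posE r E ⊆ posE r E' := by
  rintro x ⟨d, hd, hdE, rfl⟩
  exact ⟨d, hd, fun i hi => hdE i (fun hE => hi (h hE)), rfl⟩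

lemma posE_subset_posQ (r : Fin t → Fin m → ℚ) (E : Finset (Fin t)) : posE r E ⊆ posQ r :=
  posQ_eq_posE_univ r ▸ posE_mono r (subset_univ E)

lemma mem_posE_self (r : Fin t → Fin m → ℚ) {E : Finset (Fin t)} {i : Fin t} (hi : i ∈ E) :
    r i ∈ posE r E := by
  classical
  refine ⟨Pi.single i 1, fun k => ?_, fun k hk => ?_, by simp [Pi.single_apply]⟩
  · by_cases h : k = i <;> simp [h]
  · simp [show k ≠ i by rintro rfl; exact hk hi]

lemma mem_posQ_self (r : Fin t → Fin m → ℚ) (i : Fin t) : r i ∈ posQ r :=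
  posQ_eq_posE_univ r ▸ mem_posE_self r (mem_univ i)

lemma relintE_subset_posE (r : Fin t → Fin m → ℚ) (E : Finset (Fin t)) :
    relintE r E ⊆ posE r E := by
  rintro x ⟨d, hd, hdE, rfl⟩
  refine ⟨d, fun i => ?_, hdE, rfl⟩
  by_cases hi : i ∈ E
  · exact (hd i hi).le
  · exact (hdE i hi).ge

lemma sum_mem_relintE (r : Fin t → Fin m → ℚ) (E : Finset (Fin t)) :
    ∑ k ∈ E, r k ∈ relintE r E := by
  classical
  refine ⟨fun k => if k ∈ E then 1 else 0, fun k hk => by simp [hk], fun k hk => by simp [hk], ?_⟩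
  simp [ite_smul, sum_ite_mem]

lemma add_mem_relintE {r : Fin t → Fin m → ℚ} {E : Finset (Fin t)} {x y : Fin m → ℚ}
    (hx : x ∈ relintE r E) (hy : y ∈ posE r E) : x + y ∈ relintE r E := by
  obtain ⟨d, hd, hdE, rfl⟩ := hx
  obtain ⟨e, he, heE, rfl⟩ := hy
  refine ⟨d + e, fun i hi => add_pos_of_pos_of_nonneg (hd i hi) (he i),
    fun i hi => by simp [hdE i hi, heE i hi], ?_⟩
  simp only [Pi.add_apply, add_smul, sum_add_distrib]

lemma exists_sub_smul_mem_posE {r : Fin t → Fin m → ℚ} {E : Finset (Fin t)} {x y : Fin m → ℚ}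
    (hx : x ∈ relintE r E) (hy : y ∈ posE r E) : ∃ ε : ℚ, 0 < ε ∧ x - ε • y ∈ posE r E := by
  obtain ⟨d, hd, hdE, rfl⟩ := hx
  obtain ⟨e, he, heE, rfl⟩ := hy
  have hsmall : ∀ i ∈ E, ∀ᶠ ε in nhdsWithin (0 : ℚ) (Set.Ioi 0), ε * e i < d i := by
    intro i hi
    refine nhdsWithin_le_nhds ?_
    have hcont : Continuous fun ε : ℚ => ε * e i := continuous_mul_const _
    exact hcont.continuousAt.eventually_lt continuousAt_const (by simpa using hd i hi)
  obtain ⟨ε, hε, hεpos⟩ :=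
    ((Filter.eventually_all_finset E).2 hsmall |>.and self_mem_nhdsWithin).exists
  refine ⟨ε, hεpos, d - ε • e, fun i => ?_, fun i hi => by simp [hdE i hi, heE i hi], ?_⟩
  · by_cases hi : i ∈ E
    · simpa using (hε i hi).le
    · simp [hdE i hi, heE i hi]
  · simp only [smul_sum, smul_smul, Pi.sub_apply, Pi.smul_apply, smul_eq_mul, sub_smul,
      sum_sub_distrib]

lemma mem_relintE_of_posE_eq {r : Fin t → Fin m → ℚ} {E E' : Finset (Fin t)}
    (h : posE r E' = posE r E) {x : Fin m → ℚ} (hx : x ∈ relintE r E') : x ∈ relintE r E := by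
  have hy : ∑ k ∈ E, r k ∈ posE r E' := h ▸ relintE_subset_posE r E (sum_mem_relintE r E)
  obtain ⟨ε, hε, hxε⟩ := exists_sub_smul_mem_posE hx hy
  have hεy : ε • ∑ k ∈ E, r k ∈ relintE r E := by
    obtain ⟨d, hd, hdE, hsum⟩ := sum_mem_relintE r E
    refine ⟨ε • d, fun i hi => mul_pos hε (hd i hi), fun i hi => by simp [hdE i hi], ?_⟩
    simp [hsum, smul_sum, smul_smul]
  simpa using add_mem_relintE hεy (h ▸ hxε : x - ε • ∑ k ∈ E, r k ∈ posE r E)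

lemma exists_subset_mem_relintE {r : Fin t → Fin m → ℚ} {E : Finset (Fin t)} {x : Fin m → ℚ}
    (hx : x ∈ posE r E) : ∃ E' ⊆ E, x ∈ relintE r E' := by
  classical
  obtain ⟨d, hd, hdE, rfl⟩ := hx
  refine ⟨E.filter (fun k => 0 < d k), filter_subset _ _, d, fun k hk => (mem_filter.1 hk).2,
    fun k hk => ?_, rfl⟩
  by_cases hkE : k ∈ E
  · exact le_antisymm (not_lt.1 fun h => hk (mem_filter.2 ⟨hkE, h⟩)) (hd k)
  · exact hdE k hkE

lemma relintE_map {r' : ℕ} (π : (Fin m → ℚ) →ₗ[ℚ] (Fin r' → ℚ)) {r : Fin t → Fin m → ℚ}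
    {E : Finset (Fin t)} {x : Fin m → ℚ} (hx : x ∈ relintE r E) :
    π x ∈ relintE (fun k => π (r k)) E := by
  obtain ⟨d, hd, hdE, rfl⟩ := hx
  exact ⟨d, hd, hdE, by simp [map_sum]⟩

end Cones

section Farkas

variable {m : ℕ}

lemma posQ_comp_linearMap {p r' : ℕ} (f : (Fin m → ℚ) →ₗ[ℚ] (Fin r' → ℚ))
    (v : Fin p → Fin m → ℚ) : posQ (fun i => f (v i)) = f '' posQ v := by
  ext x
  constructor
  · rintro ⟨d, hd, rfl⟩
    exact ⟨_, ⟨d, hd, rfl⟩, by simp [map_sum]⟩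
  · rintro ⟨_, ⟨d, hd, rfl⟩, rfl⟩
    exact ⟨d, hd, by simp [map_sum]⟩

lemma mem_posQ_snoc_iff {p : ℕ} (v : Fin p → Fin m → ℚ) (l x : Fin m → ℚ) :
    x ∈ posQ (Fin.snoc v l : Fin (p + 1) → Fin m → ℚ) ↔
      ∃ θ : ℚ, 0 ≤ θ ∧ x - θ • l ∈ posQ v := by
  constructor
  · rintro ⟨d, hd, rfl⟩
    exact ⟨d (Fin.last p), hd _, fun i => d i.castSucc, fun i => hd _,
      by simp [Fin.sum_univ_castSucc]⟩
  · rintro ⟨θ, hθ, μ, hμ, hx⟩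
    refine ⟨Fin.snoc μ θ, Fin.lastCases (by simpa) (fun j => by simpa using hμ j), ?_⟩
    simp [Fin.sum_univ_castSucc, ← hx]

lemma dotProduct_nonneg_of_mem_posQ {p : ℕ} {v : Fin p → Fin m → ℚ} {c : Fin m → ℚ}
    (hc : ∀ i, 0 ≤ c ⬝ᵥ v i) {x : Fin m → ℚ} (hx : x ∈ posQ v) : 0 ≤ c ⬝ᵥ x := by
  obtain ⟨d, hd, rfl⟩ := hx
  simpa [dotProduct_sum, dotProduct_smul] using sum_nonneg fun i _ => mul_nonneg (hd i) (hc i)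

/-- The projection along `l` onto the hyperplane `c = 0` (when `c ⬝ᵥ l ≠ 0`). -/
def projAlong (c l : Fin m → ℚ) : (Fin m → ℚ) →ₗ[ℚ] (Fin m → ℚ) where
  toFun z := z - (c ⬝ᵥ z / c ⬝ᵥ l) • l
  map_add' y z := by simp only [dotProduct_add, add_div, add_smul]; abel
  map_smul' q z := by
    simp only [dotProduct_smul, smul_eq_mul, mul_div_assoc, RingHom.id_apply, smul_sub, smul_smul]

lemma projAlong_apply (c l z : Fin m → ℚ) : projAlong c l z = z - (c ⬝ᵥ z / c ⬝ᵥ l) • l := rfl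

lemma projAlong_self {c l : Fin m → ℚ} (h : c ⬝ᵥ l ≠ 0) : projAlong c l l = 0 := by
  simp [projAlong_apply, div_self h]

lemma dotProduct_projAlong (c l d z : Fin m → ℚ) :
    d ⬝ᵥ projAlong c l z = (d - (d ⬝ᵥ l / c ⬝ᵥ l) • c) ⬝ᵥ z := by
  simp only [projAlong_apply, sub_dotProduct, dotProduct_sub, smul_dotProduct, dotProduct_smul,
    smul_eq_mul]
  ring

lemma sub_smul_eq_of_projAlong_eq {c l x y : Fin m → ℚ} (h : projAlong c l x = projAlong c l y) :
    x - (c ⬝ᵥ (x - y) / c ⬝ᵥ l) • l = y := by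
  rw [← sub_eq_zero, ← map_sub, projAlong_apply, sub_eq_zero] at h
  rw [← h]
  abel

/-- **Farkas' lemma** over `ℚ`, proved by Fourier–Motzkin elimination of the last generator. -/
theorem mem_posQ_or_exists_dotProduct_neg {p : ℕ} (v : Fin p → Fin m → ℚ) (x : Fin m → ℚ) :
    x ∈ posQ v ∨ ∃ c : Fin m → ℚ, (∀ i, 0 ≤ c ⬝ᵥ v i) ∧ c ⬝ᵥ x < 0 := by
  induction p generalizing x with
  | zero =>
    by_cases hx : x = 0
    · exact Or.inl ⟨0, fun _ => le_rfl, by simp [hx]⟩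
    · refine Or.inr ⟨-x, fun i => i.elim0, ?_⟩
      have hpos : 0 < x ⬝ᵥ x :=
        lt_of_le_of_ne (Fintype.sum_nonneg fun _ => mul_self_nonneg _)
          (Ne.symm (dotProduct_self_eq_zero.not.2 hx))
      simpa [neg_dotProduct] using hpos
  | succ p ih =>
    rw [← Fin.snoc_init_self v]
    set u := Fin.init v
    set l := v (Fin.last p)
    have hsep : ∀ c : Fin m → ℚ, (∀ i, 0 ≤ c ⬝ᵥ (Fin.snoc u l : Fin (p + 1) → _) i) ↔
        (∀ i, 0 ≤ c ⬝ᵥ u i) ∧ 0 ≤ c ⬝ᵥ l := fun c => by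
      simp [Fin.forall_fin_succ']
    simp_rw [hsep, mem_posQ_snoc_iff]
    rcases ih u x with hx | ⟨c, hc, hcx⟩
    · exact Or.inl ⟨0, le_rfl, by simpa using hx⟩
    by_cases hcl : 0 ≤ c ⬝ᵥ l
    · exact Or.inr ⟨c, ⟨hc, hcl⟩, hcx⟩
    push Not at hcl
    rcases ih (fun i => projAlong c l (u i)) (projAlong c l x) with hPx | ⟨d, hd, hdx⟩
    · rw [posQ_comp_linearMap] at hPx
      obtain ⟨y, hy, hPy⟩ := hPx
      have hcy := dotProduct_nonneg_of_mem_posQ hc hy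
      refine Or.inl ⟨c ⬝ᵥ (x - y) / c ⬝ᵥ l,
        div_nonneg_of_nonpos (by rw [dotProduct_sub]; linarith) hcl.le, ?_⟩
      rwa [sub_smul_eq_of_projAlong_eq hPy.symm]
    · simp only [dotProduct_projAlong] at hd hdx
      refine Or.inr ⟨_, ⟨hd, ?_⟩, hdx⟩
      rw [← dotProduct_projAlong, projAlong_self hcl.ne, dotProduct_zero]

lemma exists_supporting_dotProduct_pos {p : ℕ} (v : Fin p → Fin m → ℚ) {w y : Fin m → ℚ}
    (hw : w ∈ posQ v) (hwy : ∀ ε : ℚ, 0 < ε → w - ε • y ∉ posQ v) :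
    ∃ c : Fin m → ℚ, (∀ i, 0 ≤ c ⬝ᵥ v i) ∧ c ⬝ᵥ w = 0 ∧ 0 < c ⬝ᵥ y := by
  rcases mem_posQ_or_exists_dotProduct_neg (Fin.snoc v (-w)) (-y) with hy | ⟨c, hc, hcy⟩
  · exfalso
    obtain ⟨θ, hθ, hyθ⟩ := (mem_posQ_snoc_iff v (-w) (-y)).1 hy
    rcases hθ.eq_or_lt with rfl | hθ
    · refine hwy 1 one_pos ?_
      rw [posQ_eq_posE_univ] at hw hyθ ⊢
      simpa [sub_eq_add_neg, mem_coneE] using (coneE v univ).add_mem hw hyθ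
    · refine hwy θ⁻¹ (inv_pos.2 hθ) ?_
      rw [posQ_eq_posE_univ] at hyθ ⊢
      have := (coneE v univ).smul_mem (inv_nonneg.2 hθ.le) hyθ
      rw [mem_coneE, smul_sub, smul_smul, inv_mul_cancel₀ hθ.ne'] at this
      convert this using 1
      module
  · have hcv : ∀ i, 0 ≤ c ⬝ᵥ v i := fun i => by simpa using hc i.castSucc
    have hcw : 0 ≤ -(c ⬝ᵥ w) := by simpa [dotProduct_neg] using hc (Fin.last p)
    refine ⟨c, hcv, le_antisymm (by linarith) (dotProduct_nonneg_of_mem_posQ hcv hw), ?_⟩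
    simpa [dotProduct_neg] using hcy

end Farkas

section Faces

variable {m p : ℕ}

lemma isFaceOf_iff {σ Φ : Set (Fin m → ℚ)} :
    IsFaceOf σ Φ ↔ ∃ c : Fin m → ℚ, (∀ x ∈ σ, 0 ≤ c ⬝ᵥ x) ∧ Φ = σ ∩ {x | c ⬝ᵥ x = 0} :=
  Iff.rfl

lemma IsFaceOf.sum_smul_mem_iff {v : Fin p → Fin m → ℚ} {Φ : Set (Fin m → ℚ)}
    (hΦ : IsFaceOf (posQ v) Φ) {β : Fin p → ℚ} (hβ : ∀ l, 0 ≤ β l) :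
    ∑ l, β l • v l ∈ Φ ↔ ∀ l, β l ≠ 0 → v l ∈ Φ := by
  obtain ⟨c, hc, rfl⟩ := isFaceOf_iff.1 hΦ
  have hcv : ∀ i, 0 ≤ c ⬝ᵥ v i := fun i => hc _ (mem_posQ_self v i)
  have hsum : c ⬝ᵥ ∑ l, β l • v l = ∑ l, β l * c ⬝ᵥ v l := by
    simp [dotProduct_sum, dotProduct_smul]
  simp only [Set.mem_inter_iff, Set.mem_ofPred_eq, hsum,
    sum_eq_zero_iff_of_nonneg fun i _ => mul_nonneg (hβ i) (hcv i), mem_univ, true_implies,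
    mul_eq_zero]
  exact ⟨fun h l hl => ⟨mem_posQ_self v l, (h.2 l).resolve_left hl⟩,
    fun h => ⟨⟨β, hβ, rfl⟩, fun l => or_iff_not_imp_left.2 fun hl => (h l hl).2⟩⟩

end Faces

section Lattice

variable {n m t : ℕ} {L : AddSubgroup (Fin n → ℤ)} {a : Fin n → Fin m → ℤ}

lemma exists_nat_mul_eq_intCast {k : ℕ} (γ : Fin k → ℚ) :
    ∃ N : ℕ, 0 < N ∧ ∃ z : Fin k → ℤ, ∀ i, (z i : ℚ) = N * γ i := by
  refine ⟨∏ j, (γ j).den, prod_pos fun j _ => (γ j).pos, fun i => ?_, fun i => ?_⟩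
  · exact ((∏ j, (γ j).den) / (γ i).den : ℕ) * (γ i).num
  · have hdvd : (γ i).den ∣ ∏ j, (γ j).den := dvd_prod_of_mem _ (mem_univ i)
    have hden : (((∏ j, (γ j).den) / (γ i).den : ℕ) : ℚ) * (γ i).den = ∏ j, (γ j).den := by
      rw [← Nat.cast_mul, Nat.div_mul_cancel hdvd]
    rw [Int.cast_mul, Int.cast_natCast, ← Rat.mul_den_eq_num, ← hden]
    ring

lemma sum_intCast_smul_castQ (u : Fin n → ℤ) :
    ∑ i, (u i : ℚ) • castQ a i = fun j => ((∑ i, u i • a i) j : ℚ) := by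
  ext j
  simp [castQ, Finset.sum_apply]

lemma sum_intCast_smul_castQ_eq_zero_iff {u : Fin n → ℤ} :
    ∑ i, (u i : ℚ) • castQ a i = 0 ↔ ∑ i, u i • a i = 0 := by
  rw [sum_intCast_smul_castQ, funext_iff, funext_iff]
  simp only [Pi.zero_apply, Int.cast_eq_zero]

lemma exists_mem_eq_mul_of_sum_smul_eq_zero
    (hA : ∀ u : Fin n → ℤ, u ∈ satSet L ↔ ∑ i, u i • a i = 0)
    {β : Fin n → ℚ} (hβ : ∑ i, β i • castQ a i = 0) :
    ∃ z ∈ L, ∃ N : ℚ, 0 < N ∧ ∀ i, (z i : ℚ) = N * β i := by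
  obtain ⟨N, hN, z, hz⟩ := exists_nat_mul_eq_intCast β
  have hzA : ∑ i, z i • a i = 0 := by
    rw [← sum_intCast_smul_castQ_eq_zero_iff]
    simp [hz, mul_smul, ← smul_sum, hβ]
  obtain ⟨d, hd, hdL⟩ := (hA z).2 hzA
  have hd' : (0 : ℚ) < d * d := mul_self_pos.2 (Int.cast_ne_zero.2 hd)
  refine ⟨d • d • z, zsmul_mem hdL d, d * d * N, mul_pos hd' (by exact_mod_cast hN), fun i => ?_⟩
  simp [hz]
  ring

def IsLatticeClosed (L : AddSubgroup (Fin n → ℤ)) (S : Finset (Fin n)) : Prop :=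
  ∀ u ∈ L, (∀ l, 0 < u l → l ∈ S) ↔ (∀ l, u l < 0 → l ∈ S)

open Classical in
noncomputable def gensIn (v : Fin n → Fin m → ℚ) (Φ : Set (Fin m → ℚ)) : Finset (Fin n) :=
  univ.filter fun l => v l ∈ Φ

@[simp]
lemma mem_gensIn {v : Fin n → Fin m → ℚ} {Φ : Set (Fin m → ℚ)} {l : Fin n} :
    l ∈ gensIn v Φ ↔ v l ∈ Φ := by
  simp [gensIn]

lemma isLatticeClosed_gensIn_of_isFaceOf
    (hA : ∀ u : Fin n → ℤ, u ∈ satSet L ↔ ∑ i, u i • a i = 0)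
    {Φ : Set (Fin m → ℚ)} (hΦ : IsFaceOf (posQ (castQ a)) Φ) :
    IsLatticeClosed L (gensIn (castQ a) Φ) := by
  -- `u⁺` and `u⁻` have the same `A`-degree, and faces are closed under taking supports
  have key : ∀ u ∈ L, (∀ l, 0 < u l → castQ a l ∈ Φ) → ∀ l, 0 < (-u) l → castQ a l ∈ Φ := by
    intro u hu h
    have hsat : ∑ i, u i • a i = 0 := (hA u).1 ⟨1, one_ne_zero, by simpa using hu⟩
    have hparts : ∑ l, ((u l).toNat : ℚ) • castQ a l = ∑ l, ((-u l).toNat : ℚ) • castQ a l := by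
      have hcoef : ∀ l, ((u l).toNat : ℚ) - ((-u l).toNat : ℚ) = u l := fun l => by
        exact_mod_cast congrArg (Int.cast (R := ℚ)) (Int.toNat_sub_toNat_neg (u l))
      rw [← sub_eq_zero, ← sum_sub_distrib]
      simpa [← sub_smul, hcoef] using
        (sum_intCast_smul_castQ_eq_zero_iff (a := a)).2 hsat
    have hpos := (hΦ.sum_smul_mem_iff fun l => Nat.cast_nonneg ((u l).toNat)).2
      fun l hl => h l (by simpa using hl)
    intro l hl
    exact (hΦ.sum_smul_mem_iff fun l => Nat.cast_nonneg ((-u l).toNat)).1 (hparts ▸ hpos) l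
      (by simpa using hl)
  intro u hu
  simp only [mem_gensIn]
  exact ⟨fun h l hl => key u hu h l (by simpa using hl),
    fun h l hl => by simpa using key (-u) (neg_mem hu) (by simpa using h) l (by simpa using hl)⟩

end Lattice

section ExtremeRays

variable {n m t : ℕ}

structure IsExtremeRayGenerators (a : Fin n → Fin m → ℚ) (r : Fin t → Fin m → ℚ) : Prop where
  ne_zero : ∀ k, r k ≠ 0
  isFaceOf_rayOf : ∀ k, IsFaceOf (posQ a) (rayOf (r k))
  posQ_eq : posQ a = posQ r

lemma IsExtremeRayGenerators.exists_eq_smul {a : Fin n → Fin m → ℚ} {r : Fin t → Fin m → ℚ}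
    (hr : IsExtremeRayGenerators a r) (k : Fin t) :
    ∃ l : Fin n, ∃ q : ℚ, 0 < q ∧ a l = q • r k := by
  obtain ⟨β, hβ, hrk⟩ : r k ∈ posQ a := hr.posQ_eq ▸ mem_posQ_self r k
  obtain ⟨l, -, hl⟩ := exists_ne_zero_of_sum_ne_zero (hrk ▸ hr.ne_zero k)
  have hray : a l ∈ rayOf (r k) := ((hr.isFaceOf_rayOf k).sum_smul_mem_iff hβ).1
    (hrk ▸ ⟨1, zero_le_one, (one_smul ℚ _).symm⟩) l (left_ne_zero_of_smul hl)
  obtain ⟨q, hq, hal⟩ := hray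
  refine ⟨l, q, hq.lt_of_ne ?_, hal⟩
  rintro rfl
  exact right_ne_zero_of_smul hl (by simpa using hal)

lemma sum_smul_mem_posE {v : Fin n → Fin m → ℚ} {r : Fin t → Fin m → ℚ} {E : Finset (Fin t)}
    {β : Fin n → ℚ} (hβ : ∀ l, 0 ≤ β l) (hv : ∀ l, β l ≠ 0 → v l ∈ posE r E) :
    ∑ l, β l • v l ∈ posE r E := by
  refine (coneE r E).sum_mem fun l _ => ?_
  by_cases hl : β l = 0
  · simp [hl]
  · exact (coneE r E).smul_mem (hβ l) (hv l hl)

variable {L : AddSubgroup (Fin n → ℤ)} {a : Fin n → Fin m → ℤ}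

lemma sum_sub_smul_not_mem_posQ_of_isLatticeClosed
    (hA : ∀ u : Fin n → ℤ, u ∈ satSet L ↔ ∑ i, u i • a i = 0)
    {S : Finset (Fin n)} (hS : IsLatticeClosed L S) {l₀ : Fin n} (hl₀ : l₀ ∉ S) {ε : ℚ}
    (hε : 0 < ε) : ∑ l ∈ S, castQ a l - ε • castQ a l₀ ∉ posQ (castQ a) := by
  classical
  -- a relation `∑_{l ∈ S} aₗ - ε a_{l₀} = ∑ ηₗ aₗ` gives a vector of `L` whose positive part
  -- lies in `S` but whose negative part does not
  rintro ⟨η, hη, hrel⟩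
  let β : Fin n → ℚ := fun l => (if l ∈ S then 1 else 0) - η l - if l = l₀ then ε else 0
  have hβ : ∑ l, β l • castQ a l = 0 := by
    simp only [β, sub_smul, sum_sub_distrib, ite_smul, one_smul, zero_smul, sum_ite_mem,
      univ_inter, sum_ite_eq', mem_univ, if_true, ← hrel]
    abel
  obtain ⟨z, hzL, N, hN, hz⟩ := exists_mem_eq_mul_of_sum_smul_eq_zero hA hβ
  have hpos : ∀ l, 0 < z l → l ∈ S := by
    intro l hl
    by_contra hlS
    have : (z l : ℚ) ≤ 0 := by
      rw [hz l]
      refine mul_nonpos_of_nonneg_of_nonpos hN.le ?_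
      have := hη l
      simp only [β, if_neg hlS]
      split_ifs <;> linarith
    exact absurd (by exact_mod_cast hl : (0 : ℚ) < z l) this.not_gt
  have hneg : (z l₀ : ℚ) < 0 := by
    rw [hz l₀]
    refine mul_neg_of_pos_of_neg hN ?_
    simp [β, hl₀]
    linarith [hη l₀]
  exact hl₀ ((hS z hzL).1 hpos l₀ (by exact_mod_cast hneg))

lemma exists_dotProduct_pos_of_isLatticeClosed
    (hA : ∀ u : Fin n → ℤ, u ∈ satSet L ↔ ∑ i, u i • a i = 0)
    {S : Finset (Fin n)} (hS : IsLatticeClosed L S) {l₀ : Fin n} (hl₀ : l₀ ∉ S) :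
    ∃ c : Fin m → ℚ, (∀ l, 0 ≤ c ⬝ᵥ castQ a l) ∧ (∀ l ∈ S, c ⬝ᵥ castQ a l = 0) ∧
      0 < c ⬝ᵥ castQ a l₀ := by
  have hw : ∑ l ∈ S, castQ a l ∈ posQ (castQ a) := by
    rw [posQ_eq_posE_univ]
    exact (coneE _ univ).sum_mem fun l _ => mem_posE_self _ (mem_univ l)
  obtain ⟨c, hc, hcw, hcl₀⟩ := exists_supporting_dotProduct_pos (castQ a) hw
    fun ε hε => sum_sub_smul_not_mem_posQ_of_isLatticeClosed hA hS hl₀ hε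
  rw [dotProduct_sum] at hcw
  exact ⟨c, hc, (sum_eq_zero_iff_of_nonneg fun l _ => hc l).1 hcw, hcl₀⟩

lemma exists_dotProduct_eq_zero_iff_of_isLatticeClosed
    (hA : ∀ u : Fin n → ℤ, u ∈ satSet L ↔ ∑ i, u i • a i = 0)
    {S : Finset (Fin n)} (hS : IsLatticeClosed L S) :
    ∃ c : Fin m → ℚ, (∀ l, 0 ≤ c ⬝ᵥ castQ a l) ∧ ∀ l, c ⬝ᵥ castQ a l = 0 ↔ l ∈ S := by
  classical
  choose! c hc hcS hcpos using fun l (hl : l ∉ S) =>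
    exists_dotProduct_pos_of_isLatticeClosed hA hS hl
  refine ⟨∑ l ∈ Sᶜ, c l, fun l => ?_, fun l => ?_⟩
  · rw [sum_dotProduct]
    exact sum_nonneg fun l' hl' => hc l' (mem_compl.1 hl') l
  · rw [sum_dotProduct]
    refine ⟨fun h => by_contra fun hl => ?_, fun hl => sum_eq_zero fun l' hl' =>
      hcS l' (mem_compl.1 hl') l hl⟩
    exact (sum_pos' (fun l' hl' => hc l' (mem_compl.1 hl') l)
      ⟨l, mem_compl.2 hl, hcpos l hl⟩).ne' h

lemma isFaceOf_posE_of_isLatticeClosed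
    (hA : ∀ u : Fin n → ℤ, u ∈ satSet L ↔ ∑ i, u i • a i = 0)
    {r : Fin t → Fin m → ℚ} (hr : IsExtremeRayGenerators (castQ a) r) {E : Finset (Fin t)}
    (hS : IsLatticeClosed L (gensIn (castQ a) (posE r E))) :
    IsFaceOf (posQ (castQ a)) (posE r E) := by
  obtain ⟨c, hc, hcS⟩ := exists_dotProduct_eq_zero_iff_of_isLatticeClosed hA hS
  have hΦ : IsFaceOf (posQ (castQ a)) (posQ (castQ a) ∩ {x | c ⬝ᵥ x = 0}) :=
    ⟨c, fun x hx => dotProduct_nonneg_of_mem_posQ hc hx, rfl⟩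
  refine isFaceOf_iff.2 ⟨c, fun x hx => dotProduct_nonneg_of_mem_posQ hc hx, ?_⟩
  ext x
  constructor
  · intro hx
    refine ⟨hr.posQ_eq ▸ posE_subset_posQ r E hx, ?_⟩
    obtain ⟨d, -, hdE, rfl⟩ := hx
    refine (dotProduct_sum _ _ _).trans (sum_eq_zero fun k _ => ?_)
    by_cases hk : k ∈ E
    · obtain ⟨l, q, hq, hl⟩ := hr.exists_eq_smul k
      have hcl := (hcS l).2 (mem_gensIn.2 (hl ▸ (coneE r E).smul_mem hq.le (mem_posE_self r hk)))
      rw [hl, dotProduct_smul, smul_eq_mul, mul_eq_zero] at hcl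
      simp [dotProduct_smul, hcl.resolve_left hq.ne']
    · simp [hdE k hk]
  · intro hx
    obtain ⟨β, hβ, rfl⟩ := hx.1
    exact sum_smul_mem_posE hβ fun l hl =>
      mem_gensIn.1 ((hcS l).1 ((hΦ.sum_smul_mem_iff hβ).1 hx l hl).2)

lemma isLatticeClosed_gensIn_iff_isFaceOf
    (hA : ∀ u : Fin n → ℤ, u ∈ satSet L ↔ ∑ i, u i • a i = 0)
    {r : Fin t → Fin m → ℚ} (hr : IsExtremeRayGenerators (castQ a) r) (E : Finset (Fin t)) :
    IsLatticeClosed L (gensIn (castQ a) (posE r E)) ↔ IsFaceOf (posQ (castQ a)) (posE r E) :=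
  ⟨isFaceOf_posE_of_isLatticeClosed hA hr, isLatticeClosed_gensIn_of_isFaceOf hA⟩

end ExtremeRays

section Evaluation

variable {n : ℕ} {K : Type*} [Field K] {L : AddSubgroup (Fin n → ℤ)}

def indicatorPoint (K : Type*) [Zero K] [One K] (S : Finset (Fin n)) : Fin n → K :=
  fun l => if l ∈ S then 1 else 0

lemma eval_indicatorPoint_monomial (S : Finset (Fin n)) (q : Fin n →₀ ℕ) (c : K) :
    eval (indicatorPoint K S) (monomial q c) = if q.support ⊆ S then c else 0 := by
  rw [eval_monomial, Finsupp.prod]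
  split_ifs with h
  · rw [prod_eq_one fun i hi => by simp [indicatorPoint, h hi], mul_one]
  · obtain ⟨i, hi, hiS⟩ := not_subset.1 h
    rw [prod_eq_zero hi (by simp [indicatorPoint, hiS, Finsupp.mem_support_iff.1 hi]), mul_zero]

lemma eval_indicatorPoint (S : Finset (Fin n)) (P : MvPolynomial (Fin n) K) :
    eval (indicatorPoint K S) P = ∑ q ∈ P.support with q.support ⊆ S, coeff q P := by
  conv_lhs => rw [P.as_sum]
  rw [map_sum, sum_filter]
  simp_rw [eval_indicatorPoint_monomial]

lemma mem_support_posPart (u : Fin n → ℤ) (l : Fin n) :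
    l ∈ (posPart u : Fin n →₀ ℕ).support ↔ 0 < u l := by
  simp only [Finsupp.mem_support_iff, _root_.posPart, Finsupp.coe_equivFunOnFinite_symm, ne_eq,
    Int.toNat_eq_zero, not_le]

lemma eval_indicatorPoint_binomial (S : Finset (Fin n)) (u : Fin n → ℤ) :
    eval (indicatorPoint K S) (monomial (posPart u) 1 - monomial (posPart (-u)) 1) =
      (if ∀ l, 0 < u l → l ∈ S then 1 else 0) - (if ∀ l, u l < 0 → l ∈ S then 1 else 0) := by
  simp only [map_sub, eval_indicatorPoint_monomial, subset_iff, mem_support_posPart, Pi.neg_apply,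
    neg_pos]

lemma radical_latticeIdeal_le_ker_eval {S : Finset (Fin n)} (hS : IsLatticeClosed L S) :
    (latticeIdeal K L).radical ≤ RingHom.ker (eval (indicatorPoint K S)) := by
  refine (RingHom.ker_isPrime _).radical_le_iff.2 (Ideal.span_le.2 ?_)
  rintro _ ⟨u, hu, rfl⟩
  simp [eval_indicatorPoint_binomial, hS u hu]

open Classical in
noncomputable def latticeClosedHull (L : AddSubgroup (Fin n → ℤ)) (X : Finset (Fin n)) :
    Finset (Fin n) :=
  univ.filter fun l => ∀ S, IsLatticeClosed L S → X ⊆ S → l ∈ S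

lemma subset_latticeClosedHull (X : Finset (Fin n)) : X ⊆ latticeClosedHull L X := fun l hl => by
  simp only [latticeClosedHull, mem_filter, mem_univ, true_and]
  exact fun S _ hXS => hXS hl

lemma latticeClosedHull_subset {X S : Finset (Fin n)} (hS : IsLatticeClosed L S) (hXS : X ⊆ S) :
    latticeClosedHull L X ⊆ S := fun l hl => by
  simp only [latticeClosedHull, mem_filter, mem_univ, true_and] at hl
  exact hl S hS hXS

lemma isLatticeClosed_latticeClosedHull (X : Finset (Fin n)) :
    IsLatticeClosed L (latticeClosedHull L X) := by
  intro u hu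
  simp only [latticeClosedHull, mem_filter, mem_univ, true_and]
  exact ⟨fun h l hl S hS hXS => (hS u hu).1 (fun l' hl' => h l' hl' S hS hXS) l hl,
    fun h l hl S hS hXS => (hS u hu).2 (fun l' hl' => h l' hl' S hS hXS) l hl⟩

open Classical in
lemma eval_indicatorPoint_eq_sum_latticeClosedHull (P : MvPolynomial (Fin n) K) {S : Finset (Fin n)}
    (hS : ∀ q ∈ P.support, q.support ⊆ S → latticeClosedHull L q.support ⊆ S) :
    eval (indicatorPoint K S) P = ∑ T with IsLatticeClosed L T ∧ T ⊆ S,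
      ∑ q ∈ P.support with latticeClosedHull L q.support = T, coeff q P := by
  rw [eval_indicatorPoint, ← sum_fiberwise_of_maps_to (g := fun q => latticeClosedHull L q.support)]
  · refine sum_congr rfl fun T hT => sum_congr ?_ fun _ _ => rfl
    ext q
    simp only [mem_filter, mem_univ, true_and] at hT ⊢
    exact ⟨fun h => ⟨h.1.1, h.2⟩, fun h => ⟨⟨h.1,
      (h.2 ▸ subset_latticeClosedHull q.support : q.support ⊆ T).trans hT.2⟩, h.2⟩⟩
  · intro q hq
    simp only [mem_filter, mem_univ, true_and] at hq ⊢
    exact ⟨isLatticeClosed_latticeClosedHull _, hS q hq.1 hq.2⟩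

/-- Möbius inversion over the `L`-closed sets. -/
lemma eval_indicatorPoint_eq_zero {P : MvPolynomial (Fin n) K}
    (hP : ∀ S, IsLatticeClosed L S → eval (indicatorPoint K S) P = 0) {S : Finset (Fin n)}
    (hS : ∀ q ∈ P.support, q.support ⊆ S → latticeClosedHull L q.support ⊆ S) :
    eval (indicatorPoint K S) P = 0 := by
  classical
  have hfiber : ∀ T, IsLatticeClosed L T →
      ∑ q ∈ P.support with latticeClosedHull L q.support = T, coeff q P = 0 := by
    intro T
    induction T using strongInduction with
    | H T ih =>
      intro hT
      have hsmaller : ∀ T' ∈ ({T' | IsLatticeClosed L T' ∧ T' ⊆ T} : Finset _).erase T,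
          ∑ q ∈ P.support with latticeClosedHull L q.support = T', coeff q P = 0 := by
        intro T' hT'
        obtain ⟨hne, hT'c, hT'T⟩ := by simpa using hT'
        exact ih T' (ssubset_of_subset_of_ne hT'T hne) hT'c
      have h := hP T hT
      rwa [eval_indicatorPoint_eq_sum_latticeClosedHull P
          fun q _ hq => latticeClosedHull_subset hT hq,
        ← add_sum_erase _ _ (mem_filter.2 ⟨mem_univ T, hT, subset_refl T⟩), sum_eq_zero hsmaller,
        add_zero] at h
  rw [eval_indicatorPoint_eq_sum_latticeClosedHull P hS]
  exact sum_eq_zero fun T hT => hfiber T (mem_filter.1 hT).2.1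

end Evaluation

section Degrees

variable {n m t : ℕ} {K : Type*} [Field K]

def expDegree (v : Fin n → Fin m → ℚ) (q : Fin n →₀ ℕ) : Fin m → ℚ :=
  ∑ l, (q l : ℚ) • v l

lemma map_expDegree {r' : ℕ} (π : (Fin m → ℚ) →ₗ[ℚ] (Fin r' → ℚ)) {v : Fin n → Fin m → ℚ}
    {w : Fin n → Fin r' → ℚ} (hπ : ∀ i, π (v i) = w i) (q : Fin n →₀ ℕ) :
    π (expDegree v q) = expDegree w q := by
  simp [expDegree, map_sum, hπ]

lemma expDegree_eq_of_isLHomog {L' : AddSubgroup (Fin n → ℤ)} {b : Fin n → Fin m → ℤ}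
    (hB : ∀ u : Fin n → ℤ, u ∈ satSet L' ↔ ∑ i, u i • b i = 0)
    {P : MvPolynomial (Fin n) K} (hP : IsLHomog (satSet L') P) {q q' : Fin n →₀ ℕ}
    (hq : q ∈ P.support) (hq' : q' ∈ P.support) :
    expDegree (castQ b) q = expDegree (castQ b) q' := by
  have h := (sum_intCast_smul_castQ_eq_zero_iff (a := b)).2 ((hB _).1 (hP q hq q' hq'))
  rw [← sub_eq_zero, expDegree, expDegree, ← sum_sub_distrib, ← h]
  simp [sub_smul]

variable {L : AddSubgroup (Fin n → ℤ)} {a : Fin n → Fin m → ℤ} {r : Fin t → Fin m → ℚ}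

lemma latticeClosedHull_subset_or_expDegree_mem_relintE
    (hA : ∀ u : Fin n → ℤ, u ∈ satSet L ↔ ∑ i, u i • a i = 0) {E : Finset (Fin t)}
    (hmin : ∀ E' : Finset (Fin t), ¬ IsFaceOf (posQ (castQ a)) (posE r E') →
      posE r E' ⊆ posE r E → posE r E' = posE r E)
    {q : Fin n →₀ ℕ} (hq : q.support ⊆ gensIn (castQ a) (posE r E)) :
    latticeClosedHull L q.support ⊆ gensIn (castQ a) (posE r E) ∨
      expDegree (castQ a) q ∈ relintE r E := by
  have hcoeff : ∀ l, (q l : ℚ) ≠ 0 → l ∈ q.support := fun l hl =>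
    Finsupp.mem_support_iff.2 (by exact_mod_cast hl)
  have hdeg : expDegree (castQ a) q ∈ posE r E :=
    sum_smul_mem_posE (fun l => Nat.cast_nonneg _) fun l hl => mem_gensIn.1 (hq (hcoeff l hl))
  obtain ⟨E', hE'E, hrel⟩ := exists_subset_mem_relintE hdeg
  by_cases hface : IsFaceOf (posQ (castQ a)) (posE r E')
  · left
    have hsub : q.support ⊆ gensIn (castQ a) (posE r E') := fun l hl =>
      mem_gensIn.2 (((hface.sum_smul_mem_iff fun l => Nat.cast_nonneg _).1
        (relintE_subset_posE r E' hrel)) l (by exact_mod_cast Finsupp.mem_support_iff.1 hl))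
    refine (latticeClosedHull_subset (isLatticeClosed_gensIn_of_isFaceOf hA hface) hsub).trans
      fun l hl => mem_gensIn.2 (posE_mono r hE'E (mem_gensIn.1 hl))
  · exact Or.inr (mem_relintE_of_posE_eq (hmin E' hface (posE_mono r hE'E)) hrel)

lemma expDegree_mem_relintE_of_eval_ne_zero {r' : ℕ} {L' : AddSubgroup (Fin n → ℤ)}
    {b : Fin n → Fin r' → ℤ}
    (hA : ∀ u : Fin n → ℤ, u ∈ satSet L ↔ ∑ i, u i • a i = 0)
    (hB : ∀ u : Fin n → ℤ, u ∈ satSet L' ↔ ∑ i, u i • b i = 0) {E : Finset (Fin t)}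
    (hmin : ∀ E' : Finset (Fin t), ¬ IsFaceOf (posQ (castQ a)) (posE r E') →
      posE r E' ⊆ posE r E → posE r E' = posE r E)
    (π : (Fin m → ℚ) →ₗ[ℚ] (Fin r' → ℚ)) (hπ : ∀ i, π (castQ a i) = castQ b i)
    {P : MvPolynomial (Fin n) K} (hhom : IsLHomog (satSet L') P)
    (hrad : P ∈ (latticeIdeal K L).radical)
    (hne : eval (indicatorPoint K (gensIn (castQ a) (posE r E))) P ≠ 0)
    {q : Fin n →₀ ℕ} (hq : q ∈ P.support) :
    expDegree (castQ b) q ∈ relintE (fun k => π (r k)) E := by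
  by_contra hδ
  refine hne (eval_indicatorPoint_eq_zero (fun S hS => radical_latticeIdeal_le_ker_eval hS hrad)
    fun q' hq' hsub => ?_)
  refine (latticeClosedHull_subset_or_expDegree_mem_relintE hA hmin hsub).resolve_right
    fun hrel => hδ ?_
  rw [expDegree_eq_of_isLHomog hB hhom hq hq', ← map_expDegree π hπ]
  exact relintE_map π hrel

lemma exists_eval_indicatorPoint_ne_zero
    (hA : ∀ u : Fin n → ℤ, u ∈ satSet L ↔ ∑ i, u i • a i = 0)
    (hr : IsExtremeRayGenerators (castQ a) r) {E : Finset (Fin t)}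
    (hE : ¬ IsFaceOf (posQ (castQ a)) (posE r E)) {s : ℕ} {F : Fin s → MvPolynomial (Fin n) K}
    (hF : (latticeIdeal K L).radical = (Ideal.span (Set.range F)).radical) :
    ∃ i, eval (indicatorPoint K (gensIn (castQ a) (posE r E))) (F i) ≠ 0 := by
  set S := gensIn (castQ a) (posE r E)
  obtain ⟨u, hu, hmixed⟩ : ∃ u ∈ L, ¬ ((∀ l, 0 < u l → l ∈ S) ↔ (∀ l, u l < 0 → l ∈ S)) := by
    by_contra! h
    exact hE ((isLatticeClosed_gensIn_iff_isFaceOf hA hr E).1 h)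
  by_contra! hF0
  have hker : (Ideal.span (Set.range F)).radical ≤ RingHom.ker (eval (indicatorPoint K S)) :=
    (RingHom.ker_isPrime _).radical_le_iff.2 (Ideal.span_le.2 (by rintro _ ⟨i, rfl⟩; exact hF0 i))
  have hmem : monomial (posPart u) (1 : K) - monomial (posPart (-u)) 1 ∈ latticeIdeal K L :=
    Ideal.subset_span ⟨u, hu, rfl⟩
  have hbinom := hker (hF ▸ Ideal.le_radical hmem)
  -- the binomial of the mixed vector `u` evaluates to `±1` at this point
  rw [RingHom.mem_ker, eval_indicatorPoint_binomial] at hbinom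
  by_cases h₁ : ∀ l, 0 < u l → l ∈ S <;> by_cases h₂ : ∀ l, u l < 0 → l ∈ S <;>
    simp_all

end Degrees

section Matchings

variable {t f m : ℕ} {rB : Fin t → Fin m → ℚ} {𝔼 : Fin f → Finset (Fin t)}

lemma DFace.mono {T T' : Set (Fin f)} (h : T' ⊆ T) (hT : DFace rB 𝔼 T) : DFace rB 𝔼 T' :=
  Set.Nonempty.mono (Set.biInter_subset_biInter_left h) hT

lemma isOmegaMatching_singletons :
    IsOmegaMatching rB 𝔼 (univ.image fun j : Fin f => ({j} : Finset (Fin f))) := by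
  refine ⟨fun T hT => ?_, fun T₁ h₁ T₂ h₂ hne => ?_⟩
  · obtain ⟨j, -, rfl⟩ := mem_image.1 hT
    exact ⟨singleton_nonempty j, ⟨_, by simpa using sum_mem_relintE rB (𝔼 j)⟩⟩
  · obtain ⟨j₁, -, rfl⟩ := mem_image.1 h₁
    obtain ⟨j₂, -, rfl⟩ := mem_image.1 h₂
    exact disjoint_singleton.2 fun h => hne (h ▸ rfl)

lemma suppCard_singletons : suppCard (univ.image fun j : Fin f => ({j} : Finset (Fin f))) = f := by
  have hcover : (univ.image fun j : Fin f => ({j} : Finset (Fin f))).biUnion id = univ :=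
    eq_univ_of_forall fun j => mem_biUnion.2 ⟨{j}, mem_image_of_mem _ (mem_univ j),
      mem_singleton_self j⟩
  rw [suppCard, hcover, card_univ, Fintype.card_fin]

lemma deltaOmega_le_card {M : Finset (Finset (Fin f))} (hM : IsOmegaMatching rB 𝔼 M)
    (hcover : M.biUnion id = univ) : deltaOmega rB 𝔼 ≤ M.card :=
  Nat.sInf_le ⟨M, hM, rfl, fun M' _ => by
    rw [suppCard, suppCard, hcover]
    exact card_le_univ _⟩

/-- Maximal matchings cover every vertex, since the singletons form a matching of full
support. -/
lemma exists_isOmegaMatching_card_eq_deltaOmega :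
    ∃ M, IsOmegaMatching rB 𝔼 M ∧ M.card = deltaOmega rB 𝔼 ∧ M.biUnion id = univ := by
  classical
  obtain ⟨M₀, hM₀, hM₀max⟩ := exists_max_image ({M | IsOmegaMatching rB 𝔼 M} : Finset _) suppCard
    ⟨_, mem_filter.2 ⟨mem_univ _, isOmegaMatching_singletons⟩⟩
  obtain ⟨M, hM, hcard, hmax⟩ := Nat.sInf_mem (show Set.Nonempty {s | ∃ M, IsOmegaMatching rB 𝔼 M ∧
      M.card = s ∧ ∀ M', IsOmegaMatching rB 𝔼 M' → suppCard M' ≤ suppCard M} from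
    ⟨_, M₀, (mem_filter.1 hM₀).2, rfl, fun M' hM' => hM₀max M' (mem_filter.2 ⟨mem_univ _, hM'⟩)⟩)
  refine ⟨M, hM, hcard, eq_univ_of_card _ (le_antisymm (card_le_univ _) ?_)⟩
  have := hmax _ isOmegaMatching_singletons
  rw [suppCard_singletons, suppCard] at this
  simpa using this

lemma chromaticNumber_compSkel_le_deltaOmega :
    (compSkel rB 𝔼).chromaticNumber ≤ (deltaOmega rB 𝔼 : ℕ∞) := by
  obtain ⟨M, hM, hcard, hcover⟩ := exists_isOmegaMatching_card_eq_deltaOmega (rB := rB) (𝔼 := 𝔼)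
  have hblock : ∀ j, ∃ T ∈ M, j ∈ T := fun j => by
    simpa using (hcover ▸ mem_univ j : j ∈ M.biUnion id)
  choose T hTM hjT using hblock
  let C : (compSkel rB 𝔼).Coloring {T // T ∈ M} :=
    SimpleGraph.Coloring.mk (fun j => ⟨T j, hTM j⟩) fun {v w} hvw hTvw => hvw.2 <|
      (hM.1 _ (hTM v)).2.mono (by
        rintro x (rfl | rfl)
        · exact hjT x
        · have hT : T v = T x := congrArg Subtype.val hTvw
          rw [mem_coe, hT]
          exact hjT x)
  simpa [hcard] using C.colorable.chromaticNumber_le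

lemma deltaOmega_le_of_dFace_fibers {s : ℕ} (g : Fin f → Fin s)
    (hg : ∀ j, DFace rB 𝔼 {k | g k = g j}) : deltaOmega rB 𝔼 ≤ s := by
  classical
  let fiber : Fin s → Finset (Fin f) := fun i => {k | g k = i}
  let M := (univ.image g).image fiber
  have hM : IsOmegaMatching rB 𝔼 M := by
    refine ⟨fun T hT => ?_, fun T₁ h₁ T₂ h₂ hne => ?_⟩
    · obtain ⟨_, hi, rfl⟩ := mem_image.1 hT
      obtain ⟨j, -, rfl⟩ := mem_image.1 hi
      exact ⟨⟨j, by simp [fiber]⟩, by simpa [fiber] using hg j⟩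
    · obtain ⟨i₁, -, rfl⟩ := mem_image.1 h₁
      obtain ⟨i₂, -, rfl⟩ := mem_image.1 h₂
      exact disjoint_filter.2 fun k _ h₁ h₂ => hne (by rw [← h₁, ← h₂])
  have hcover : M.biUnion id = univ := eq_univ_of_forall fun j => mem_biUnion.2
    ⟨fiber (g j), mem_image_of_mem _ (mem_image_of_mem _ (mem_univ j)), by simp [fiber]⟩
  calc deltaOmega rB 𝔼 ≤ M.card := deltaOmega_le_card hM hcover
    _ ≤ (univ.image g).card := card_image_le
    _ ≤ s := (card_le_univ _).trans_eq (Fintype.card_fin s)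

end Matchings

section HomogeneousRank

variable {n : ℕ} {K : Type*} [Field K]

lemma IsLHomog.mono {Λ Λ' : Set (Fin n → ℤ)} (h : Λ ⊆ Λ') {F : MvPolynomial (Fin n) K}
    (hF : IsLHomog Λ F) : IsLHomog Λ' F := fun u hu v hv => h (hF u hu v hv)

lemma posPart_sub_posPart_neg (u : Fin n → ℤ) :
    (fun j => ((posPart u : Fin n →₀ ℕ) j : ℤ) - ((posPart (-u) : Fin n →₀ ℕ) j : ℤ)) = u := by
  ext j
  simp only [_root_.posPart, Finsupp.coe_equivFunOnFinite_symm, Pi.neg_apply]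
  omega

lemma isLHomog_binomial (L' : AddSubgroup (Fin n → ℤ)) {u : Fin n → ℤ} (hu : u ∈ L') :
    IsLHomog (L' : Set (Fin n → ℤ)) (monomial (posPart u) (1 : K) - monomial (posPart (-u)) 1) := by
  have hsupp : ∀ p ∈ (monomial (posPart u) (1 : K) - monomial (posPart (-u)) 1).support,
      p = (posPart u : Fin n →₀ ℕ) ∨ p = (posPart (-u) : Fin n →₀ ℕ) := fun p hp =>
    (mem_union.1 (support_sub _ _ _ hp)).imp (fun h => mem_singleton.1 (support_monomial_subset h))
      (fun h => mem_singleton.1 (support_monomial_subset h))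
  have hneg : (fun j => ((posPart (-u) : Fin n →₀ ℕ) j : ℤ) - ((posPart u : Fin n →₀ ℕ) j : ℤ)) =
      -u := by
    simpa using posPart_sub_posPart_neg (-u)
  intro p hp p' hp'
  rcases hsupp p hp with rfl | rfl <;> rcases hsupp p' hp' with rfl | rfl <;>
    simp [posPart_sub_posPart_neg, hneg, hu, ← Pi.zero_def, zero_mem]

variable {Λ Λ' : Set (Fin n → ℤ)} {J : Ideal (MvPolynomial (Fin n) K)}

lemma araH_le_araH_of_subset (h : Λ ⊆ Λ') (hJ : ∃ s, ∃ F : Fin s → MvPolynomial (Fin n) K,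
    (∀ i, IsLHomog Λ (F i)) ∧ J.radical = (Ideal.span (Set.range F)).radical) :
    araH Λ' J ≤ araH Λ J := by
  obtain ⟨F, hF, hrad⟩ := Nat.sInf_mem hJ
  exact Nat.sInf_le ⟨F, fun i => (hF i).mono h, hrad⟩

lemma exists_family_card_araH (hJ : ∃ s, ∃ F : Fin s → MvPolynomial (Fin n) K,
    (∀ i, IsLHomog Λ (F i)) ∧ J.radical = (Ideal.span (Set.range F)).radical) :
    ∃ F : Fin (araH Λ J) → MvPolynomial (Fin n) K,
      (∀ i, IsLHomog Λ (F i)) ∧ J.radical = (Ideal.span (Set.range F)).radical :=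
  Nat.sInf_mem hJ

/-- By noetherianity, finitely many of the binomial generators of `I_L` generate it. -/
lemma exists_isLHomog_family {L L' : AddSubgroup (Fin n → ℤ)} (hLL' : L ≤ L') :
    ∃ s, ∃ F : Fin s → MvPolynomial (Fin n) K, (∀ i, IsLHomog (L' : Set (Fin n → ℤ)) (F i)) ∧
      (latticeIdeal K L).radical = (Ideal.span (Set.range F)).radical := by
  obtain ⟨G, hGsub, hG⟩ := (Submodule.fg_span_iff_fg_span_finset_subset _).1
    (IsNoetherian.noetherian (latticeIdeal K L))
  obtain ⟨s, F, hF⟩ := G.finite_toSet.fin_embedding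
  refine ⟨s, F, fun i => ?_, by rw [hF]; exact congrArg Ideal.radical hG⟩
  obtain ⟨u, hu, hFu⟩ := hGsub (hF ▸ Set.mem_range_self i)
  exact hFu ▸ isLHomog_binomial L' (hLL' hu)

end HomogeneousRank

theorem stmt17_general {K : Type*} [Field K] {n m t f r' : ℕ}
    (L L' : AddSubgroup (Fin n → ℤ))
    (hLL' : L ≤ L')
    (a : Fin n → Fin m → ℤ)
    (hA : ∀ u : Fin n → ℤ, u ∈ satSet L ↔ ∑ i, u i • a i = 0)
    (b : Fin n → Fin r' → ℤ)
    (hB : ∀ u : Fin n → ℤ, u ∈ satSet L' ↔ ∑ i, u i • b i = 0)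
    (rvec : Fin t → Fin m → ℤ)
    (hr0 : ∀ i, castQ rvec i ≠ 0)
    (hray : ∀ i, IsFaceOf (posQ (castQ a)) (rayOf (castQ rvec i)))
    (hspan : posQ (castQ a) = posQ (castQ rvec))
    (𝔼 : Fin f → Finset (Fin t))
    (hE1 : ∀ j : Fin f, ¬ IsFaceOf (posQ (castQ a)) (posE (castQ rvec) (𝔼 j)))
    (hE2 : ∀ (j : Fin f) (E : Finset (Fin t)),
      ¬ IsFaceOf (posQ (castQ a)) (posE (castQ rvec) E) →
      posE (castQ rvec) E ⊆ posE (castQ rvec) (𝔼 j) →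
      posE (castQ rvec) E = posE (castQ rvec) (𝔼 j))
    (π : (Fin m → ℚ) →ₗ[ℚ] (Fin r' → ℚ))
    (hπ : ∀ i, π (castQ a i) = castQ b i)
    :
    (compSkel (fun i => π (castQ rvec i)) 𝔼).chromaticNumber ≤
      (deltaOmega (fun i => π (castQ rvec i)) 𝔼 : ℕ∞) ∧
    deltaOmega (fun i => π (castQ rvec i)) 𝔼 ≤ araH (satSet L') (latticeIdeal K L) ∧
    araH (satSet L') (latticeIdeal K L) ≤
      araH (L' : Set (Fin n → ℤ)) (latticeIdeal K L) := by
  have hr : IsExtremeRayGenerators (castQ a) (castQ rvec) := ⟨hr0, hray, hspan⟩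
  have hL'sat : (L' : Set (Fin n → ℤ)) ⊆ satSet L' := fun u hu => ⟨1, one_ne_zero, by simpa⟩
  obtain ⟨s, F, hF, hFrad⟩ := exists_isLHomog_family (K := K) hLL'
  refine ⟨chromaticNumber_compSkel_le_deltaOmega, ?_,
    araH_le_araH_of_subset hL'sat ⟨s, F, hF, hFrad⟩⟩
  obtain ⟨G, hG, hGrad⟩ := exists_family_card_araH ⟨s, F, fun i => (hF i).mono hL'sat, hFrad⟩
  have hGmem : ∀ i, G i ∈ (latticeIdeal K L).radical := fun i =>
    hGrad ▸ Ideal.le_radical (Ideal.subset_span (Set.mem_range_self i))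
  choose g hg using fun j => exists_eval_indicatorPoint_ne_zero hA hr (hE1 j) hGrad
  refine deltaOmega_le_of_dFace_fibers g fun j => ?_
  obtain ⟨q, hq⟩ : (G (g j)).support.Nonempty :=
    nonempty_iff_ne_empty.2 fun h => hg j (by rw [support_eq_empty.1 h, map_zero])
  refine ⟨expDegree (castQ b) q, Set.mem_iInter₂.2 fun k (hk : g k = g j) => ?_⟩
  exact expDegree_mem_relintE_of_eval_ne_zero hA hB (hE2 k) π hπ (hG _) (hGmem _) (hg k)
    (hk ▸ hq)

/-- `γ(complement of the {0,1}-skeleton of D_{L'}^L) ≤ δ(D_{L'}^L)_Ω ≤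
ara_{Sat(L')}(I_L) ≤ ara_{L'}(I_L)`. -/
theorem stmt17 {K : Type*} [Field K] {n m t f r' : ℕ}
    (L L' : AddSubgroup (Fin n → ℤ))
    (hLpos : ∀ u ∈ L, (∀ i, 0 ≤ u i) → u = (0 : Fin n → ℤ))
    (hLL' : L ≤ L')
    (a : Fin n → Fin m → ℤ)
    (hA : ∀ u : Fin n → ℤ, u ∈ satSet L ↔ ∑ i, u i • a i = 0)
    (b : Fin n → Fin r' → ℤ)
    (hB : ∀ u : Fin n → ℤ, u ∈ satSet L' ↔ ∑ i, u i • b i = 0)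
    (rvec : Fin t → Fin m → ℤ)
    (hr0 : ∀ i, castQ rvec i ≠ 0)
    (hray : ∀ i, IsFaceOf (posQ (castQ a)) (rayOf (castQ rvec i)))
    (hrinj : ∀ i j : Fin t, rayOf (castQ rvec i) = rayOf (castQ rvec j) → i = j)
    (hspan : posQ (castQ a) = posQ (castQ rvec))
    (𝔼 : Fin f → Finset (Fin t))
    (hE1 : ∀ j : Fin f, ¬ IsFaceOf (posQ (castQ a)) (posE (castQ rvec) (𝔼 j)))
    (hE2 : ∀ (j : Fin f) (E : Finset (Fin t)),
      ¬ IsFaceOf (posQ (castQ a)) (posE (castQ rvec) E) →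
      posE (castQ rvec) E ⊆ posE (castQ rvec) (𝔼 j) →
      posE (castQ rvec) E = posE (castQ rvec) (𝔼 j))
    (hE3 : ∀ E : Finset (Fin t), ¬ IsFaceOf (posQ (castQ a)) (posE (castQ rvec) E) →
      ∃ j : Fin f, posE (castQ rvec) (𝔼 j) ⊆ posE (castQ rvec) E)
    (hEinj : ∀ j k : Fin f, posE (castQ rvec) (𝔼 j) = posE (castQ rvec) (𝔼 k) → j = k)
    (π : (Fin m → ℚ) →ₗ[ℚ] (Fin r' → ℚ))
    (hπ : ∀ i, π (castQ a i) = castQ b i)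
    :
    (compSkel (fun i => π (castQ rvec i)) 𝔼).chromaticNumber ≤
      (deltaOmega (fun i => π (castQ rvec i)) 𝔼 : ℕ∞) ∧
    deltaOmega (fun i => π (castQ rvec i)) 𝔼 ≤ araH (satSet L') (latticeIdeal K L) ∧
    araH (satSet L') (latticeIdeal K L) ≤
      araH (L' : Set (Fin n → ℤ)) (latticeIdeal K L) :=
  stmt17_general L L' hLL' a hA b hB rvec hr0 hray hspan 𝔼 hE1 hE2 π hπ
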